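/- arXiv:2410.02246 — 6 statements merged into one kernel-verified Lean document; each statement's English description precedes it below -/
import Mathlib

section
/- Let d ≥ 1, Δ > 0, 0 < ε < 1, 0 < δ < 1 and σ ≥ sqrt(2 * log(1.25/δ)) * Δ / ε. Then for any two points x, y ∈ ℝ^d with Euclidean distance ‖x − y‖₂ ≤ Δ and every measurable set O ⊆ ℝ^d, the isotropic Gaussian measures satisfy N(x, σ²I_d)(O) ≤ exp(ε) · N(y, σ²I_d)(O) + δ; i.e., the Gaussian mechanism with noise scale σ satisfies (ε,δ)-differential privacy for any function of ℓ₂-sensitivity Δ. -/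
open MeasureTheory ProbabilityTheory

/-- The isotropic Gaussian measure `N(m, σ²·I_d)` on `ℝ^d` (Euclidean space), defined as the
product of one-dimensional real Gaussian measures `gaussianReal (m i) σ²`. -/
noncomputable def isoGaussian (d : ℕ) (m : EuclideanSpace ℝ (Fin d)) (σ : ℝ) :
    Measure (EuclideanSpace ℝ (Fin d)) :=
  Measure.map (WithLp.toLp 2) (Measure.pi (fun i => gaussianReal (m i) ((σ ^ 2).toNNReal)))

/-!
`N(x, σ²I)` has density `exp ∘ L` with respect to `N(y, σ²I)`, where
`L z = (⟪x - y, z⟫ - (‖x‖² - ‖y‖²) / 2) / σ²` is the privacy loss. Off the event `L > ε` this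
density is at most `e^ε`, so it suffices that this event has `N(x, σ²I)`-probability at most `δ`.
With `u = (x - y) / ‖x - y‖` and `a = ‖x - y‖ / σ`, the event is `⟪u, z - x⟫ / σ > ε / a - a / 2`,
and `⟪u, z - x⟫ / σ` is standard normal by rotation invariance of the standard Gaussian. The
hypothesis on `σ` says `a ≤ ε / c` with `c = √(2 log (1.25 / δ))`, so the threshold is at least
`c - ε / (2c)`. If that is nonnegative, the tail bound `P(Z > t) ≤ e^{-t²/2} / 2` gives at most
`e^{1/2 - c²/2} / 2 ≤ 1.25 e^{-c²/2} = δ`; otherwise `c² < 1/2`, so `δ > 15/16`, while the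
threshold is only slightly negative and the tail is still below `0.6`.
-/

open Real Set
open scoped RealInnerProductSpace NNReal ENNReal

theorem MeasureTheory.Measure.pi_withDensity {ι : Type*} [Fintype ι] {α : ι → Type*}
    [∀ i, MeasurableSpace (α i)] (μ : ∀ i, Measure (α i)) [∀ i, IsProbabilityMeasure (μ i)]
    {f : ∀ i, α i → ℝ≥0∞} (hf : ∀ i, Measurable (f i))
    [∀ i, SigmaFinite ((μ i).withDensity (f i))] :
    Measure.pi (fun i ↦ (μ i).withDensity (f i))
      = (Measure.pi μ).withDensity (fun z ↦ ∏ i, f i (z i)) := by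
  refine Measure.pi_eq fun s hs ↦ ?_
  have hind : (univ.pi s).indicator (fun z ↦ ∏ i, f i (z i))
      = fun z ↦ ∏ i, (s i).indicator (f i) (z i) := by
    ext z
    simp only [Set.indicator, Finset.prod_ite_zero]
    split_ifs <;> simp_all
  rw [withDensity_apply _ (.univ_pi hs), ← lintegral_indicator (.univ_pi hs), hind,
    lintegral_prod_eq_prod_lintegral_of_indepFun _ _
      (iIndepFun_pi fun i ↦ ((hf i).indicator (hs i)).aemeasurable)
      fun i ↦ ((hf i).indicator (hs i)).comp (measurable_pi_apply i)]
  refine Finset.prod_congr rfl fun i _ ↦ ?_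
  rw [withDensity_apply _ (hs i), ← lintegral_indicator (hs i),
    (measurePreserving_eval μ i).lintegral_comp ((hf i).indicator (hs i))]

theorem MeasureTheory.Measure.map_withDensity_comp {α β : Type*} [MeasurableSpace α]
    [MeasurableSpace β] (μ : Measure α) {f : α → β} (hf : Measurable f) {g : β → ℝ≥0∞}
    (hg : Measurable g) : (μ.withDensity (g ∘ f)).map f = (μ.map f).withDensity g := by
  ext s hs
  rw [map_apply hf hs, withDensity_apply _ (hf hs), withDensity_apply _ hs,
    setLIntegral_map hs hg hf]
  rfl

theorem MeasureTheory.Measure.withDensity_apply_le_mul_add {α : Type*} [MeasurableSpace α]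
    {ν : Measure α} [SFinite ν] {f : α → ℝ≥0∞} {E : Set α} (hE : MeasurableSet E) {c : ℝ≥0∞}
    (hf : ∀ z ∉ E, f z ≤ c) (O : Set α) :
    ν.withDensity f O ≤ c * ν O + ν.withDensity f E := by
  have hdiff : ν.withDensity f (O \ E) ≤ c * ν O :=
    calc ν.withDensity f (O \ E) = ∫⁻ z in O \ E, f z ∂ν := withDensity_apply' _ _
      _ ≤ ∫⁻ _ in O \ E, c ∂ν := lintegral_mono_ae <|
          (ae_restrict_of_ae_restrict_of_subset (sdiff_subset_compl O E)
            (ae_restrict_mem hE.compl)).mono hf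
      _ = c * ν (O \ E) := setLIntegral_const _ _
      _ ≤ c * ν O := by gcongr; exact sdiff_subset
  calc ν.withDensity f O ≤ ν.withDensity f (O \ E) + ν.withDensity f E :=
        (measure_mono (subset_sdiff_union O E)).trans (measure_union_le _ _)
    _ ≤ c * ν O + ν.withDensity f E := by gcongr

lemma gaussianReal_eq_withDensity (p q : ℝ) {v : ℝ≥0} (hv : v ≠ 0) :
    gaussianReal p v = (gaussianReal q v).withDensity
      (fun u ↦ ENNReal.ofReal (exp (((p - q) * u - (p ^ 2 - q ^ 2) / 2) / v))) := by
  rw [gaussianReal_of_var_ne_zero _ hv, gaussianReal_of_var_ne_zero _ hv,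
    ← withDensity_mul _ (measurable_gaussianPDF _ _) (by fun_prop)]
  congr 1
  ext u
  simp only [Pi.mul_apply, gaussianPDF]
  rw [← ENNReal.ofReal_mul (gaussianPDFReal_nonneg _ _ _)]
  simp only [gaussianPDFReal, mul_assoc, ← exp_add]
  congr 3
  have : (v : ℝ) ≠ 0 := by exact_mod_cast hv
  field_simp
  ring

lemma gaussianReal_Ioi_self (m : ℝ) {v : ℝ≥0} (hv : v ≠ 0) : gaussianReal m v (Ioi m) = 2⁻¹ := by
  have := nullSingletonClass_gaussianReal (μ := m) hv
  have hsymm : gaussianReal m v (Iio m) = gaussianReal m v (Ioi m) := by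
    have hreflect : (gaussianReal m v).map (2 * m - ·) = gaussianReal m v := by
      rw [gaussianReal_map_const_sub]; ring_nf
    conv_rhs => rw [← hreflect]
    rw [Measure.map_apply (by fun_prop) measurableSet_Ioi]
    congr 1
    ext u
    simp only [mem_Iio, mem_preimage, mem_Ioi]
    constructor <;> intro h <;> linarith
  have htotal : gaussianReal m v (Iio m) + gaussianReal m v (Ioi m) = 1 := by
    rw [measure_congr Ioi_ae_eq_Ici, ← measure_union (Iio_disjoint_Ici le_rfl) measurableSet_Ici,
      Iio_union_Ici, measure_univ]
  rw [hsymm, ← two_mul] at htotal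
  exact ENNReal.eq_inv_of_mul_eq_one_left (by rwa [mul_comm])

lemma gaussianReal_Ioi_le_half_exp {t : ℝ} (ht : 0 ≤ t) :
    gaussianReal 0 1 (Ioi t) ≤ ENNReal.ofReal (exp (-t ^ 2 / 2)) * 2⁻¹ := by
  -- Tilting to `N(t, 1)` costs a factor `exp (t ^ 2 / 2 - t u) ≤ exp (-t ^ 2 / 2)` on `u > t`.
  rw [gaussianReal_eq_withDensity 0 t one_ne_zero, withDensity_apply _ measurableSet_Ioi,
    ← gaussianReal_Ioi_self t one_ne_zero, ← setLIntegral_const]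
  refine setLIntegral_mono measurable_const fun u hu ↦ ENNReal.ofReal_le_ofReal ?_
  rw [exp_le_exp]
  have : t * t ≤ t * u := mul_le_mul_of_nonneg_left (le_of_lt hu) ht
  simp only [NNReal.coe_one, div_one]
  nlinarith

lemma gaussianPDFReal_zero_one_le (u : ℝ) : gaussianPDFReal 0 1 u ≤ 2 / 5 := by
  have hsqrt : 5 / 2 ≤ √(2 * π) := by
    rw [Real.le_sqrt (by norm_num) (by positivity)]
    nlinarith [pi_gt_d2]
  have hexp : exp (-u ^ 2 / 2) ≤ 1 := exp_le_one_iff.mpr (by nlinarith)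
  simp only [gaussianPDFReal, NNReal.coe_one, mul_one, sub_zero]
  calc (√(2 * π))⁻¹ * exp (-u ^ 2 / 2) ≤ (5 / 2)⁻¹ * 1 := by gcongr
    _ = 2 / 5 := by norm_num

lemma gaussianReal_Ioi_le_of_nonpos {t : ℝ} (ht : t ≤ 0) :
    gaussianReal 0 1 (Ioi t) ≤ ENNReal.ofReal (1 / 2 - 2 / 5 * t) := by
  have hIoc : gaussianReal 0 1 (Ioc t 0) ≤ ENNReal.ofReal (-t * (2 / 5)) := by
    rw [gaussianReal_apply 0 one_ne_zero]
    calc ∫⁻ u in Ioc t 0, gaussianPDF 0 1 u ≤ ∫⁻ u in Ioc t 0, ENNReal.ofReal (2 / 5) :=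
          lintegral_mono fun u ↦ ENNReal.ofReal_le_ofReal (gaussianPDFReal_zero_one_le u)
      _ = ENNReal.ofReal (-t * (2 / 5)) := by
          rw [setLIntegral_const, Real.volume_Ioc, ← ENNReal.ofReal_mul (by norm_num)]
          ring_nf
  calc gaussianReal 0 1 (Ioi t) ≤ gaussianReal 0 1 (Ioc t 0) + gaussianReal 0 1 (Ioi 0) := by
        rw [← Ioc_union_Ioi_eq_Ioi ht]; exact measure_union_le _ _
    _ ≤ ENNReal.ofReal (-t * (2 / 5)) + ENNReal.ofReal (1 / 2) := by
        rw [gaussianReal_Ioi_self 0 one_ne_zero, ← one_div, ← ENNReal.ofReal_one,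
          ← ENNReal.ofReal_ofNat 2, ← ENNReal.ofReal_div_of_pos two_pos]
        gcongr
    _ = ENNReal.ofReal (1 / 2 - 2 / 5 * t) := by
        rw [← ENNReal.ofReal_add (by nlinarith) (by norm_num)]; ring_nf

lemma gaussianReal_Ioi_le_of_mul_sqrt_log_le {ε δ a : ℝ} (hε1 : ε < 1) (hδ : 0 < δ)
    (hδ1 : δ < 1) (ha : 0 < a) (haε : a * √(2 * log (1.25 / δ)) ≤ ε) :
    gaussianReal 0 1 (Ioi (ε / a - a / 2)) ≤ ENNReal.ofReal δ := by
  set L := log (1.25 / δ)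
  have hL : 1 / 5 ≤ L := by
    have h : 1 - (1.25 / δ)⁻¹ ≤ L := one_sub_inv_le_log_of_pos (by positivity)
    rw [inv_div] at h
    norm_num at h
    linarith
  have hδL : δ = 1.25 * exp (-L) := by
    rw [exp_neg, exp_log (by positivity)]; field_simp
  set c := √(2 * L)
  have hc0 : 0 < c := by positivity
  have hc2 : c ^ 2 = 2 * L := sq_sqrt (by linarith)
  have hhalf : c * (ε / (2 * c)) = ε / 2 := by field_simp
  -- The threshold is smallest when `a * c = ε`.
  have hmono : c - ε / (2 * c) ≤ ε / a - a / 2 := by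
    have h1 : c ≤ ε / a := by rw [le_div_iff₀ ha]; linarith
    have h2 : a / 2 ≤ ε / (2 * c) := by rw [div_le_div_iff₀ two_pos (by positivity)]; linarith
    linarith
  refine (measure_mono (Ioi_subset_Ioi hmono)).trans ?_
  rcases le_or_gt 0 (c - ε / (2 * c)) with h | h
  · have hexp_half : exp (1 / 2) ≤ 2.5 := by
      have : exp (1 / 2) ^ 2 = exp 1 := by rw [← exp_nat_mul]; norm_num
      nlinarith [exp_one_lt_d9, exp_pos (1 / 2)]
    have hsq : 2 * L - 1 ≤ (c - ε / (2 * c)) ^ 2 := by nlinarith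
    have hexp : exp (-(c - ε / (2 * c)) ^ 2 / 2) ≤ exp (-L) * exp (1 / 2) := by
      rw [← exp_add, exp_le_exp]; linarith
    calc gaussianReal 0 1 (Ioi (c - ε / (2 * c)))
        ≤ ENNReal.ofReal (exp (-(c - ε / (2 * c)) ^ 2 / 2)) * 2⁻¹ :=
          gaussianReal_Ioi_le_half_exp h
      _ = ENNReal.ofReal (exp (-(c - ε / (2 * c)) ^ 2 / 2) / 2) := by
          rw [ENNReal.ofReal_div_of_pos two_pos, ENNReal.ofReal_ofNat, ENNReal.div_eq_inv_mul,
            mul_comm]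
      _ ≤ ENNReal.ofReal δ := by
          refine ENNReal.ofReal_le_ofReal ?_
          rw [hδL]
          nlinarith [exp_pos (-L)]
  · -- Here `2 c ^ 2 < ε < 1`, which forces `δ > 15 / 16`.
    have hL4 : L < 1 / 4 := by nlinarith
    have hδ_large : 15 / 16 < δ := by rw [hδL]; linarith [add_one_le_exp (-L)]
    have hc : 3 / 5 ≤ c := by nlinarith
    have hεc : ε / (2 * c) ≤ 5 / 6 := by
      rw [div_le_iff₀ (by positivity)]; linarith
    refine (gaussianReal_Ioi_le_of_nonpos h.le).trans (ENNReal.ofReal_le_ofReal ?_)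
    linarith

lemma stdGaussian_map_inner {E : Type*} [NormedAddCommGroup E] [InnerProductSpace ℝ E]
    [FiniteDimensional ℝ E] [MeasurableSpace E] [BorelSpace E] (u : E) :
    (stdGaussian E).map (fun z ↦ ⟪u, z⟫) = gaussianReal 0 (‖u‖ ^ 2).toNNReal := by
  have h := IsGaussian.map_eq_gaussianReal (μ := stdGaussian E) (innerSL ℝ u)
  rwa [integral_strongDual_stdGaussian, variance_dual_stdGaussian, innerSL_apply_norm] at h

lemma isoGaussian_eq_map_stdGaussian (d : ℕ) (m : EuclideanSpace ℝ (Fin d)) (σ : ℝ) :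
    isoGaussian d m σ = (stdGaussian (EuclideanSpace ℝ (Fin d))).map (fun z ↦ m + σ • z) := by
  have hcomp : (fun z ↦ m + σ • z) ∘ WithLp.toLp 2 = WithLp.toLp 2 ∘ fun z i ↦ m i + σ * z i := by
    ext; simp
  have hcoord (i : Fin d) :
      (gaussianReal 0 1).map (fun z ↦ m i + σ * z) = gaussianReal (m i) (σ ^ 2).toNNReal := by
    rw [← Function.comp_def (m i + ·) (σ * ·), ← Measure.map_map (by fun_prop) (by fun_prop),
      gaussianReal_map_const_mul, gaussianReal_map_const_add]
    congr 1
    · simp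
    · ext; simp [sq_nonneg]
  have (i : Fin d) : IsProbabilityMeasure ((gaussianReal 0 1).map (fun z ↦ m i + σ * z)) := by
    rw [hcoord]; infer_instance
  rw [← map_pi_eq_stdGaussian, Measure.map_map (by fun_prop) (by fun_prop), hcomp,
    ← Measure.map_map (by fun_prop) (by fun_prop),
    Measure.pi_map_pi (f := fun i z ↦ m i + σ * z) (by fun_prop), isoGaussian]
  simp_rw [hcoord]

instance isProbabilityMeasure_isoGaussian (d : ℕ) (m : EuclideanSpace ℝ (Fin d)) (σ : ℝ) :
    IsProbabilityMeasure (isoGaussian d m σ) := by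
  rw [isoGaussian_eq_map_stdGaussian]
  exact Measure.isProbabilityMeasure_map (by fun_prop)

lemma isoGaussian_map_inner_sub_div {d : ℕ} (m u : EuclideanSpace ℝ (Fin d)) (hu : ‖u‖ = 1)
    {σ : ℝ} (hσ : σ ≠ 0) :
    (isoGaussian d m σ).map (fun z ↦ ⟪u, z - m⟫ / σ) = gaussianReal 0 1 := by
  rw [isoGaussian_eq_map_stdGaussian, Measure.map_map (by fun_prop) (by fun_prop)]
  have : (fun z ↦ ⟪u, z - m⟫ / σ) ∘ (fun z ↦ m + σ • z) = fun z ↦ ⟪u, z⟫ := by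
    ext z; simp [inner_smul_right, hσ]
  rw [this, stdGaussian_map_inner, hu]
  simp

noncomputable def privacyLoss {E : Type*} [NormedAddCommGroup E] [InnerProductSpace ℝ E]
    (x y : E) (σ : ℝ) (z : E) : ℝ :=
  (⟪x - y, z⟫ - (‖x‖ ^ 2 - ‖y‖ ^ 2) / 2) / σ ^ 2

lemma isoGaussian_eq_withDensity {d : ℕ} (x y : EuclideanSpace ℝ (Fin d)) {σ : ℝ} (hσ : σ ≠ 0) :
    isoGaussian d x σ = (isoGaussian d y σ).withDensity
      (fun z ↦ ENNReal.ofReal (exp (privacyLoss x y σ z))) := by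
  set v := (σ ^ 2).toNNReal
  have hv : (v : ℝ) = σ ^ 2 := Real.coe_toNNReal _ (sq_nonneg σ)
  have hv0 : v ≠ 0 := by rw [← NNReal.coe_ne_zero, hv]; positivity
  have hpi : Measure.pi (fun i ↦ gaussianReal (x i) v)
      = (Measure.pi fun i ↦ gaussianReal (y i) v).withDensity
          (fun z ↦ ∏ i,
            ENNReal.ofReal (exp (((x i - y i) * z i - (x i ^ 2 - y i ^ 2) / 2) / v))) := by
    conv_lhs => enter [1, i]; rw [gaussianReal_eq_withDensity (x i) (y i) hv0]
    exact Measure.pi_withDensity _ fun i ↦ by fun_prop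
  have hdensity : (fun z : Fin d → ℝ ↦
        ∏ i, ENNReal.ofReal (exp (((x i - y i) * z i - (x i ^ 2 - y i ^ 2) / 2) / v)))
      = (fun z ↦ ENNReal.ofReal (exp (privacyLoss x y σ z))) ∘ WithLp.toLp 2 := by
    ext z
    rw [Function.comp_apply, ← ENNReal.ofReal_prod_of_nonneg fun i _ ↦ (exp_pos _).le, ← exp_sum]
    congr 2
    simp [privacyLoss, hv, ← Finset.sum_div, PiLp.inner_apply, EuclideanSpace.real_norm_sq_eq,
      Finset.sum_sub_distrib, mul_comm]
  rw [isoGaussian, isoGaussian, hpi, hdensity, Measure.map_withDensity_comp _ (by fun_prop)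
    (by unfold privacyLoss; fun_prop)]

lemma privacyLoss_le {E : Type*} [NormedAddCommGroup E] [InnerProductSpace ℝ E] {x y u z : E}
    (hxy : x ≠ y) (hu : x - y = ‖x - y‖ • u) {ε σ : ℝ} (hσ : 0 < σ)
    (hz : ⟪u, z - x⟫ / σ ≤ ε / (‖x - y‖ / σ) - ‖x - y‖ / σ / 2) :
    privacyLoss x y σ z ≤ ε := by
  set s := ‖x - y‖
  have hs : 0 < s := norm_pos_iff.mpr (sub_ne_zero.mpr hxy)
  have hid : ⟪x - y, z⟫ - (‖x‖ ^ 2 - ‖y‖ ^ 2) / 2 = s * ⟪u, z - x⟫ + s ^ 2 / 2 := by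
    rw [← real_inner_smul_left, ← hu, norm_sub_sq_real]
    simp only [inner_sub_left, inner_sub_right, real_inner_self_eq_norm_sq, real_inner_comm x y]
    ring
  rw [div_le_iff₀ hσ] at hz
  have hthreshold : s * ((ε / (s / σ) - s / σ / 2) * σ) = ε * σ ^ 2 - s ^ 2 / 2 := by
    field_simp
  rw [privacyLoss, div_le_iff₀ (by positivity), hid]
  nlinarith [mul_le_mul_of_nonneg_left hz hs.le]

theorem gaussian_mechanism_dp_general (d : ℕ) (Δ ε δ σ : ℝ)
    (hε : 0 < ε) (hε1 : ε < 1) (hδ : 0 < δ) (hδ1 : δ < 1)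
    (hσ : Real.sqrt (2 * Real.log (1.25 / δ)) * Δ / ε ≤ σ)
    (x y : EuclideanSpace ℝ (Fin d)) (hxy : ‖x - y‖ ≤ Δ)
    (O : Set (EuclideanSpace ℝ (Fin d))) :
    isoGaussian d x σ O ≤ ENNReal.ofReal (Real.exp ε) * isoGaussian d y σ O
      + ENNReal.ofReal δ := by
  rcases eq_or_ne x y with rfl | hne
  · exact le_add_right (le_mul_of_one_le_left' (ENNReal.one_le_ofReal.mpr (one_le_exp hε.le)))
  set s := ‖x - y‖
  have hs : 0 < s := norm_pos_iff.mpr (sub_ne_zero.mpr hne)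
  have hc : 0 < √(2 * log (1.25 / δ)) :=
    sqrt_pos.mpr (mul_pos two_pos (log_pos (by rw [lt_div_iff₀ hδ]; linarith)))
  have hσ0 : 0 < σ := lt_of_lt_of_le (by have := hs.trans_le hxy; positivity) hσ
  set u := s⁻¹ • (x - y)
  have hu : ‖u‖ = 1 := norm_smul_inv_norm (𝕜 := ℝ) (sub_ne_zero.mpr hne)
  have hxu : x - y = s • u := by simp [u, smul_smul, hs.ne']
  set E := (fun z ↦ ⟪u, z - x⟫ / σ) ⁻¹' Ioi (ε / (s / σ) - s / σ / 2)
  have hbad : isoGaussian d x σ E ≤ ENNReal.ofReal δ := by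
    rw [← Measure.map_apply (by fun_prop) measurableSet_Ioi,
      isoGaussian_map_inner_sub_div x u hu hσ0.ne']
    refine gaussianReal_Ioi_le_of_mul_sqrt_log_le hε1 hδ hδ1 (by positivity) ?_
    rw [div_le_iff₀ hε] at hσ
    rw [div_mul_eq_mul_div, div_le_iff₀ hσ0]
    nlinarith
  have hloss (z) (hz : z ∉ E) :
      ENNReal.ofReal (exp (privacyLoss x y σ z)) ≤ ENNReal.ofReal (exp ε) :=
    ENNReal.ofReal_le_ofReal (exp_le_exp.mpr (privacyLoss_le hne hxu hσ0 (not_lt.mp hz)))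
  have key := (isoGaussian d y σ).withDensity_apply_le_mul_add
    (measurableSet_Ioi.preimage (by fun_prop)) hloss O
  rw [← isoGaussian_eq_withDensity x y hσ0.ne'] at key
  exact key.trans (by gcongr)

/-- **Gaussian mechanism.** If `σ ≥ √(2 log(1.25/δ)) · Δ / ε` with `0 < ε < 1`, `0 < δ < 1`,
then for any two means at Euclidean distance at most `Δ`, the isotropic Gaussian measures are
`(ε,δ)`-indistinguishable: `N(x, σ²I)(O) ≤ e^ε · N(y, σ²I)(O) + δ` for all measurable `O`. -/
theorem gaussian_mechanism_dp (d : ℕ) (hd : 1 ≤ d) (Δ ε δ σ : ℝ)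
    (hΔ : 0 < Δ) (hε : 0 < ε) (hε1 : ε < 1) (hδ : 0 < δ) (hδ1 : δ < 1)
    (hσ : Real.sqrt (2 * Real.log (1.25 / δ)) * Δ / ε ≤ σ)
    (x y : EuclideanSpace ℝ (Fin d)) (hxy : ‖x - y‖ ≤ Δ)
    (O : Set (EuclideanSpace ℝ (Fin d))) (hO : MeasurableSet O) :
    isoGaussian d x σ O ≤ ENNReal.ofReal (Real.exp ε) * isoGaussian d y σ O
      + ENNReal.ofReal δ :=
  gaussian_mechanism_dp_general d Δ ε δ σ hε hε1 hδ hδ1 hσ x y hxy O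
end

section
/- Let μ and ν be probability measures on a measurable space α, and let ε ≥ 0, δ ≥ 0 be such that μ(A) ≤ exp(ε)·ν(A) + δ for every measurable set A. Then for every measurable function g : α → ℝ with 0 ≤ g(x) ≤ 1 for all x, one has ∫ g dμ ≤ exp(ε) · ∫ g dν + δ. -/
open MeasureTheory Set

/-!
By the layer-cake formula, `∫ g dρ = ∫₀¹ ρ{g ≥ t} dt` for `g` with values in `[0, 1]`.
Applying the setwise inequality to each superlevel set `{g ≥ t}` and integrating over
`t ∈ (0, 1]` gives the claim, the additive slack `δ` being integrated over an interval of
length one.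
-/

section

variable {α : Type*} [MeasurableSpace α]

theorem antitone_measureReal_setOf_le (μ : Measure α) [IsFiniteMeasure μ] (g : α → ℝ) :
    Antitone fun t : ℝ => μ.real {x | t ≤ g x} :=
  fun _ _ hst => measureReal_mono fun _ (h : _ ≤ _) => hst.trans h

theorem integrableOn_measureReal_setOf_le_Ioc (μ : Measure α) [IsFiniteMeasure μ]
    (g : α → ℝ) (a b : ℝ) :
    IntegrableOn (fun t : ℝ => μ.real {x | t ≤ g x}) (Ioc a b) :=
  ((antitone_measureReal_setOf_le μ g).locallyIntegrable.integrableOn_isCompact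
    isCompact_Icc).mono_set Ioc_subset_Icc_self

theorem measureReal_le_mul_add_of_le_ofReal_mul_add {μ ν : Measure α} [IsFiniteMeasure ν]
    {c d : ℝ} (hc : 0 ≤ c) (hd : 0 ≤ d) {A : Set α}
    (h : μ A ≤ ENNReal.ofReal c * ν A + ENNReal.ofReal d) :
    μ.real A ≤ c * ν.real A + d := by
  have hfin : ENNReal.ofReal c * ν A ≠ ⊤ :=
    ENNReal.mul_ne_top ENNReal.ofReal_ne_top (measure_ne_top _ _)
  calc μ.real A ≤ (ENNReal.ofReal c * ν A + ENNReal.ofReal d).toReal :=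
        ENNReal.toReal_mono (ENNReal.add_ne_top.2 ⟨hfin, ENNReal.ofReal_ne_top⟩) h
    _ = c * ν.real A + d := by
        rw [ENNReal.toReal_add hfin ENNReal.ofReal_ne_top, ENNReal.toReal_mul,
          ENNReal.toReal_ofReal hc, ENNReal.toReal_ofReal hd, measureReal_def]

theorem integral_le_mul_integral_add_of_measureReal_le {μ ν : Measure α} [IsFiniteMeasure μ]
    [IsFiniteMeasure ν] {c d M : ℝ} (hM : 0 ≤ M)
    (hμν : ∀ A, MeasurableSet A → μ.real A ≤ c * ν.real A + d)
    {g : α → ℝ} (hg : Measurable g) (hg0 : ∀ x, 0 ≤ g x) (hgM : ∀ x, g x ≤ M) :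
    ∫ x, g x ∂μ ≤ c * ∫ x, g x ∂ν + M * d := by
  have layerCake : ∀ (ρ : Measure α) [IsFiniteMeasure ρ],
      ∫ x, g x ∂ρ = ∫ t in Ioc 0 M, ρ.real {x | t ≤ g x} := fun ρ _ =>
    (Integrable.of_bound hg.aestronglyMeasurable M (.of_forall fun x => by
      rw [Real.norm_of_nonneg (hg0 x)]; exact hgM x)).integral_eq_integral_Ioc_meas_le
      (.of_forall hg0) (.of_forall hgM)
  have hν := integrableOn_measureReal_setOf_le_Ioc ν g 0 M
  have hconst : IntegrableOn (fun _ : ℝ => d) (Ioc 0 M) :=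
    integrableOn_const measure_Ioc_lt_top.ne
  rw [layerCake μ, layerCake ν]
  calc ∫ t in Ioc 0 M, μ.real {x | t ≤ g x}
      ≤ ∫ t in Ioc 0 M, (c * ν.real {x | t ≤ g x} + d) :=
        setIntegral_mono_on (integrableOn_measureReal_setOf_le_Ioc μ g 0 M)
          ((hν.const_mul c).add hconst) measurableSet_Ioc
          fun t _ => hμν _ (hg measurableSet_Ici)
    _ = c * (∫ t in Ioc 0 M, ν.real {x | t ≤ g x}) + M * d := by
        rw [integral_add (hν.const_mul c) hconst, integral_const_mul, setIntegral_const,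
          measureReal_def, Real.volume_Ioc, ENNReal.toReal_ofReal (by linarith), sub_zero,
          smul_eq_mul]

end

theorem integral_le_exp_mul_integral_add_of_dp_general {α : Type*} [MeasurableSpace α]
    (μ ν : Measure α) [IsProbabilityMeasure μ] [IsProbabilityMeasure ν]
    (ε δ : ℝ) (hδ : 0 ≤ δ)
    (hdp : ∀ A : Set α, MeasurableSet A →
      μ A ≤ ENNReal.ofReal (Real.exp ε) * ν A + ENNReal.ofReal δ)
    (g : α → ℝ) (hg : Measurable g) (hg0 : ∀ x, 0 ≤ g x) (hg1 : ∀ x, g x ≤ 1) :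
    ∫ x, g x ∂μ ≤ Real.exp ε * ∫ x, g x ∂ν + δ := by
  simpa using integral_le_mul_integral_add_of_measureReal_le zero_le_one
    (fun A hA => measureReal_le_mul_add_of_le_ofReal_mul_add (Real.exp_nonneg ε) hδ (hdp A hA))
    hg hg0 hg1

/-- **From sets to [0,1]-valued test functions.** If `μ(A) ≤ e^ε ν(A) + δ` for all measurable
sets `A`, then `∫ g dμ ≤ e^ε ∫ g dν + δ` for every measurable `g` with values in `[0,1]`. -/
theorem integral_le_exp_mul_integral_add_of_dp {α : Type*} [MeasurableSpace α]
    (μ ν : Measure α) [IsProbabilityMeasure μ] [IsProbabilityMeasure ν]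
    (ε δ : ℝ) (hε : 0 ≤ ε) (hδ : 0 ≤ δ)
    (hdp : ∀ A : Set α, MeasurableSet A →
      μ A ≤ ENNReal.ofReal (Real.exp ε) * ν A + ENNReal.ofReal δ)
    (g : α → ℝ) (hg : Measurable g) (hg0 : ∀ x, 0 ≤ g x) (hg1 : ∀ x, g x ≤ 1) :
    ∫ x, g x ∂μ ≤ Real.exp ε * ∫ x, g x ∂ν + δ :=
  integral_le_exp_mul_integral_add_of_dp_general μ ν ε δ hδ hdp g hg hg0 hg1
end

section
/- Let μ and ν be probability measures on a measurable space α satisfying μ(A) ≤ exp(ε)·ν(A) + δ for every measurable set A (with ε ≥ 0, δ ≥ 0), and let κ be a Markov kernel from α to a measurable space β. Then the post-processed measures satisfy (μ.bind κ)(B) ≤ exp(ε) · (ν.bind κ)(B) + δ for every measurable set B ⊆ β. In other words, (ε,δ)-differential privacy is preserved under arbitrary randomized post-processing. -/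
open MeasureTheory ProbabilityTheory Set
open scoped ENNReal

/-! By the layer-cake formula, a `[0, 1]`-valued `g` has `∫⁻ g ∂μ = ∫⁻ t in (0, 1], μ {g > t}`.
Applying the indistinguishability inequality to each superlevel set and integrating over
`t ∈ (0, 1]`, a set of length one, yields `∫⁻ g ∂μ ≤ e^ε ∫⁻ g ∂ν + δ`. For `g x = κ x B` the two
integrals are `(μ.bind κ) B` and `(ν.bind κ) B`. -/

section Indistinguishability

variable {α : Type*} [MeasurableSpace α]

theorem lintegral_ofReal_eq_setLIntegral_Ioc_meas_lt (μ : Measure α) {f : α → ℝ}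
    (hf : Measurable f) (hf0 : 0 ≤ f) (hf1 : ∀ x, f x ≤ 1) :
    ∫⁻ x, ENNReal.ofReal (f x) ∂μ = ∫⁻ t in Ioc 0 1, μ {x | t < f x} := by
  have hsupp : (fun t => μ {x | t < f x}).support ⊆ Iic 1 := fun t ht =>
    mem_Iic.2 <| not_lt.1 fun h1t => ht (by simp [fun x => not_lt.2 ((hf1 x).trans h1t.le)])
  rw [lintegral_eq_lintegral_meas_lt μ (ae_of_all _ hf0) hf.aemeasurable,
    ← setLIntegral_eq_of_support_subset hsupp, Measure.restrict_restrict measurableSet_Iic,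
    Iic_inter_Ioi]

theorem lintegral_le_mul_lintegral_add_of_forall_measure_le {μ ν : Measure α} {c d : ℝ≥0∞}
    (h : ∀ A, MeasurableSet A → μ A ≤ c * ν A + d) {g : α → ℝ≥0∞} (hg : Measurable g)
    (hg1 : ∀ x, g x ≤ 1) :
    ∫⁻ x, g x ∂μ ≤ c * ∫⁻ x, g x ∂ν + d := by
  set f : α → ℝ := fun x => (g x).toReal
  have hfg : ∀ x, ENNReal.ofReal (f x) = g x := fun x =>
    ENNReal.ofReal_toReal (ne_top_of_le_ne_top ENNReal.one_ne_top (hg1 x))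
  have hf : Measurable f := hg.ennreal_toReal
  have hf1 : ∀ x, f x ≤ 1 := fun x =>
    ENNReal.toReal_le_of_le_ofReal zero_le_one (by simpa using hg1 x)
  have hanti : Antitone fun t : ℝ => ν {x | t < f x} := fun s t hst =>
    measure_mono fun x hx => hst.trans_lt hx
  simp_rw [← hfg,
    lintegral_ofReal_eq_setLIntegral_Ioc_meas_lt _ hf (fun _ => ENNReal.toReal_nonneg) hf1]
  calc ∫⁻ t in Ioc 0 1, μ {x | t < f x}
      ≤ ∫⁻ t in Ioc 0 1, (c * ν {x | t < f x} + d) :=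
        lintegral_mono fun t => h _ (measurableSet_lt measurable_const hf)
    _ = c * (∫⁻ t in Ioc 0 1, ν {x | t < f x}) + d := by
        rw [lintegral_add_right _ measurable_const, lintegral_const_mul _ hanti.measurable,
          setLIntegral_const, Real.volume_Ioc, sub_zero, ENNReal.ofReal_one, mul_one]

end Indistinguishability

theorem dp_post_processing_general {α β : Type*} [MeasurableSpace α] [MeasurableSpace β]
    (μ ν : Measure α)
    (ε δ : ℝ)
    (hdp : ∀ A : Set α, MeasurableSet A →
      μ A ≤ ENNReal.ofReal (Real.exp ε) * ν A + ENNReal.ofReal δ)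
    (κ : Kernel α β) [IsMarkovKernel κ]
    (B : Set β) (hB : MeasurableSet B) :
    μ.bind κ B ≤ ENNReal.ofReal (Real.exp ε) * ν.bind κ B + ENNReal.ofReal δ := by
  rw [Measure.bind_apply hB κ.aemeasurable, Measure.bind_apply hB κ.aemeasurable]
  exact lintegral_le_mul_lintegral_add_of_forall_measure_le hdp (κ.measurable_coe hB)
    fun _ => prob_le_one

/-- **Post-processing theorem of differential privacy.** If `μ(A) ≤ e^ε ν(A) + δ` for every
measurable set `A`, and `κ` is a Markov kernel, then the post-processed measures `μ.bind κ` and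
`ν.bind κ` satisfy the same `(ε,δ)`-indistinguishability inequality. -/
theorem dp_post_processing {α β : Type*} [MeasurableSpace α] [MeasurableSpace β]
    (μ ν : Measure α) [IsProbabilityMeasure μ] [IsProbabilityMeasure ν]
    (ε δ : ℝ) (hε : 0 ≤ ε) (hδ : 0 ≤ δ)
    (hdp : ∀ A : Set α, MeasurableSet A →
      μ A ≤ ENNReal.ofReal (Real.exp ε) * ν A + ENNReal.ofReal δ)
    (κ : Kernel α β) [IsMarkovKernel κ]
    (B : Set β) (hB : MeasurableSet B) :
    μ.bind κ B ≤ ENNReal.ofReal (Real.exp ε) * ν.bind κ B + ENNReal.ofReal δ :=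
  dp_post_processing_general μ ν ε δ hdp κ B hB
end

section
/- Let μ and ν be probability measures on a measurable space α with μ absolutely continuous with respect to ν, and set h(x) = (dμ/dν)(x) (the real-valued Radon–Nikodym derivative). Let (Ω, P) be a probability space and X : ℕ → Ω → α a sequence of independent, identically distributed random variables each with law ν, and let A ⊆ α be measurable. Then for P-almost every ω, (1/n) Σ_{i<n} 1_A(X_i(ω)) · h(X_i(ω)) → μ(A) as n → ∞. -/
/-!
Weighting by `h = dμ/dν` turns the indicator of `A` into a `ν`-integrable function whose
`ν`-mean is `∫_A h dν = μ(A)`. The weighted sums are therefore empirical means of the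
i.i.d. integrable variables `1_A(X_i) h(X_i)`, and Etemadi's strong law of large numbers applies.
-/

open MeasureTheory ProbabilityTheory Filter Topology

namespace ProbabilityTheory

variable {Ω α E : Type*} [MeasurableSpace Ω] [MeasurableSpace α]
  [NormedAddCommGroup E] [NormedSpace ℝ E] [CompleteSpace E] [MeasurableSpace E] [BorelSpace E]

theorem strong_law_ae_comp {P : Measure Ω} {ν : Measure α} {X : ℕ → Ω → α}
    (hX : ∀ i, AEMeasurable (X i) P) (hindep : iIndepFun X P) (hlaw : ∀ i, P.map (X i) = ν)
    {f : α → E} (hfm : Measurable f) (hf : Integrable f ν) :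
    ∀ᵐ ω ∂P, Tendsto (fun n : ℕ => (n : ℝ)⁻¹ • ∑ i ∈ Finset.range n, f (X i ω))
      atTop (𝓝 (∫ x, f x ∂ν)) := by
  have hf_map : AEStronglyMeasurable f (P.map (X 0)) := (hlaw 0) ▸ hf.aestronglyMeasurable
  have hint : Integrable (f ∘ X 0) P := by
    rwa [← integrable_map_measure hf_map (hX 0), hlaw 0]
  have hident : ∀ i, IdentDistrib (f ∘ X i) (f ∘ X 0) P P := fun i =>
    (IdentDistrib.mk (hX i) (hX 0) (by rw [hlaw i, hlaw 0])).comp hfm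
  have hpair : Pairwise fun i j => (f ∘ X i) ⟂ᵢ[P] (f ∘ X j) := fun i j hij =>
    (hindep.indepFun hij).comp hfm hfm
  have hmean : ∫ ω, f (X 0 ω) ∂P = ∫ x, f x ∂ν := by
    rw [← hlaw 0, integral_map (hX 0) hf_map]
  simpa only [Function.comp_apply, hmean] using strong_law_ae (fun i => f ∘ X i) hint hpair hident

end ProbabilityTheory

namespace MeasureTheory.Measure

variable {α : Type*} [MeasurableSpace α] {μ ν : Measure α}

theorem indicator_one_mul_toReal_rnDeriv (A : Set α) :
    (fun x => A.indicator (fun _ => (1 : ℝ)) x * (μ.rnDeriv ν x).toReal) =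
      A.indicator fun x => (μ.rnDeriv ν x).toReal := by
  funext x
  by_cases hx : x ∈ A <;> simp [hx]

theorem integral_indicator_one_mul_toReal_rnDeriv [SigmaFinite μ] [SigmaFinite ν] (hac : μ ≪ ν)
    {A : Set α} (hA : MeasurableSet A) :
    ∫ x, A.indicator (fun _ => (1 : ℝ)) x * (μ.rnDeriv ν x).toReal ∂ν = μ.real A := by
  rw [indicator_one_mul_toReal_rnDeriv, integral_indicator hA, setIntegral_toReal_rnDeriv hac]

end MeasureTheory.Measure

open Measure in
theorem sir_weighted_indicator_tendsto_general {α Ω : Type*} [MeasurableSpace α] [MeasurableSpace Ω]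
    (μ ν : Measure α) [IsProbabilityMeasure μ] [IsProbabilityMeasure ν] (hac : μ ≪ ν)
    (P : Measure Ω)
    (X : ℕ → Ω → α) (hX : ∀ i, Measurable (X i))
    (hindep : iIndepFun X P)
    (hlaw : ∀ i, Measure.map (X i) P = ν)
    (A : Set α) (hA : MeasurableSet A) :
    ∀ᵐ ω ∂P, Tendsto
      (fun n : ℕ => (1 / (n : ℝ)) * ∑ i ∈ Finset.range n,
        A.indicator (fun _ => (1 : ℝ)) (X i ω) * (μ.rnDeriv ν (X i ω)).toReal)
      atTop (nhds (μ A).toReal) := by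
  have hmeas : Measurable fun x => A.indicator (fun _ => (1 : ℝ)) x * (μ.rnDeriv ν x).toReal := by
    rw [indicator_one_mul_toReal_rnDeriv]
    exact (measurable_rnDeriv μ ν).ennreal_toReal.indicator hA
  have hint : Integrable (fun x => A.indicator (fun _ => (1 : ℝ)) x * (μ.rnDeriv ν x).toReal) ν := by
    rw [indicator_one_mul_toReal_rnDeriv]
    exact integrable_toReal_rnDeriv.indicator hA
  have hslln := strong_law_ae_comp (fun i => (hX i).aemeasurable) hindep hlaw hmeas hint
  rw [integral_indicator_one_mul_toReal_rnDeriv hac hA] at hslln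
  simpa only [one_div, smul_eq_mul, measureReal_def] using hslln

/-- **SIR weighted empirical measure convergence.** Let `μ ≪ ν` be probability measures with
the importance weight `h = dμ/dν` (real-valued), let `X i` be i.i.d. with law `ν`, and let `A` be
measurable. Then almost surely `(1/n) Σ_{i<n} 1_A(X_i) · h(X_i) → μ(A)`. -/
theorem sir_weighted_indicator_tendsto {α Ω : Type*} [MeasurableSpace α] [MeasurableSpace Ω]
    (μ ν : Measure α) [IsProbabilityMeasure μ] [IsProbabilityMeasure ν] (hac : μ ≪ ν)
    (P : Measure Ω) [IsProbabilityMeasure P]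
    (X : ℕ → Ω → α) (hX : ∀ i, Measurable (X i))
    (hindep : iIndepFun X P)
    (hlaw : ∀ i, Measure.map (X i) P = ν)
    (A : Set α) (hA : MeasurableSet A) :
    ∀ᵐ ω ∂P, Tendsto
      (fun n : ℕ => (1 / (n : ℝ)) * ∑ i ∈ Finset.range n,
        A.indicator (fun _ => (1 : ℝ)) (X i ω) * (μ.rnDeriv ν (X i ω)).toReal)
      atTop (nhds (μ A).toReal) :=
  sir_weighted_indicator_tendsto_general μ ν hac P X hX hindep hlaw A hA
end

section
/- Let μ and ν be probability measures on a measurable space α with μ absolutely continuous with respect to ν, and set h(x) = (dμ/dν)(x) (the real-valued Radon–Nikodym derivative). Let (Ω, P) be a probability space and X : ℕ → Ω → α a sequence of independent, identically distributed random variables each with law ν, and let A ⊆ α be measurable. Then for P-almost every ω, the self-normalized importance-sampling estimator converges to the target probability: (Σ_{i<n} 1_A(X_i(ω)) · h(X_i(ω))) / (Σ_{i<n} h(X_i(ω))) → μ(A) as n → ∞. -/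
open MeasureTheory ProbabilityTheory Filter Topology Finset

/-!
With `h = dμ/dν`, the numerator and the denominator divided by `n` are empirical means of the
`ν`-integrable functions `1_A · h` and `h` along the i.i.d. sample, so by the strong law of large
numbers they converge almost surely to `∫ 1_A h dν = μ(A)` and `∫ h dν = μ(α) = 1`; the ratio
then converges to `μ(A)`.
-/

theorem Filter.Tendsto.div_of_div_right {ι K : Type*} [Field K] [TopologicalSpace K]
    [ContinuousMul K] [ContinuousInv₀ K] {l : Filter ι} {a b c : ι → K} {x y : K}
    (ha : Tendsto (fun n => a n / c n) l (𝓝 x)) (hb : Tendsto (fun n => b n / c n) l (𝓝 y))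
    (hy : y ≠ 0) (hc : ∀ᶠ n in l, c n ≠ 0) :
    Tendsto (fun n => a n / b n) l (𝓝 (x / y)) :=
  (ha.div hb hy).congr' <| hc.mono fun _ hcn => div_div_div_cancel_right₀ hcn _ _

theorem strong_law_ae_comp_of_map_eq {α Ω : Type*} [MeasurableSpace α] [MeasurableSpace Ω]
    {P : Measure Ω} {ν : Measure α} {X : ℕ → Ω → α} (hX : ∀ i, AEMeasurable (X i) P)
    (hindep : Pairwise fun i j => IndepFun (X i) (X j) P) (hlaw : ∀ i, P.map (X i) = ν)
    {g : α → ℝ} (hg : Measurable g) (hint : Integrable g ν) :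
    ∀ᵐ ω ∂P,
      Tendsto (fun n : ℕ => (∑ i ∈ range n, g (X i ω)) / n) atTop (𝓝 (∫ x, g x ∂ν)) := by
  have hident : ∀ i, IdentDistrib (X i) (X 0) P P :=
    fun i => ⟨hX i, hX 0, by rw [hlaw i, hlaw 0]⟩
  have hint₀ : Integrable (g ∘ X 0) P := by
    rw [← hlaw 0] at hint
    exact (integrable_map_measure hg.aestronglyMeasurable (hX 0)).mp hint
  have hmean : ∫ ω, g (X 0 ω) ∂P = ∫ x, g x ∂ν := by
    rw [← hlaw 0, integral_map (hX 0) hg.aestronglyMeasurable]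
  simpa only [hmean] using strong_law_ae_real (fun i ω => g (X i ω)) hint₀
    (fun i j hij => (hindep hij).comp hg hg) fun i => (hident i).comp hg

theorem Set.indicator_one_mul_apply {ι M₀ : Type*} [MulZeroOneClass M₀] (s : Set ι)
    (f : ι → M₀) (i : ι) : s.indicator (fun _ => 1) i * f i = s.indicator f i := by
  simp only [← s.indicator_mul_left (fun _ => 1) f, one_mul]

theorem integral_indicator_toReal_rnDeriv {α : Type*} [MeasurableSpace α] {μ ν : Measure α}
    [SigmaFinite μ] [SigmaFinite ν] (hac : μ ≪ ν) {A : Set α} (hA : MeasurableSet A) :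
    ∫ x, A.indicator (fun y => (μ.rnDeriv ν y).toReal) x ∂ν = μ.real A := by
  rw [integral_indicator hA, Measure.setIntegral_toReal_rnDeriv hac A]

theorem sir_self_normalized_tendsto_general {α Ω : Type*} [MeasurableSpace α] [MeasurableSpace Ω]
    (μ ν : Measure α) [IsProbabilityMeasure μ] [IsProbabilityMeasure ν] (hac : μ ≪ ν)
    (P : Measure Ω)
    (X : ℕ → Ω → α) (hX : ∀ i, Measurable (X i))
    (hindep : iIndepFun X P)
    (hlaw : ∀ i, Measure.map (X i) P = ν)
    (A : Set α) (hA : MeasurableSet A) :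
    ∀ᵐ ω ∂P, Tendsto
      (fun n : ℕ =>
        (∑ i ∈ Finset.range n,
          A.indicator (fun _ => (1 : ℝ)) (X i ω) * (μ.rnDeriv ν (X i ω)).toReal)
        / (∑ i ∈ Finset.range n, (μ.rnDeriv ν (X i ω)).toReal))
      atTop (nhds (μ A).toReal) := by
  have hmh : Measurable fun x => (μ.rnDeriv ν x).toReal :=
    (μ.measurable_rnDeriv ν).ennreal_toReal
  have hXae : ∀ i, AEMeasurable (X i) P := fun i => (hX i).aemeasurable
  have hpair : Pairwise fun i j => IndepFun (X i) (X j) P := fun _ _ hij => hindep.indepFun hij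
  have hnum := strong_law_ae_comp_of_map_eq hXae hpair hlaw (hmh.indicator hA)
    (Measure.integrable_toReal_rnDeriv.indicator hA)
  have hden := strong_law_ae_comp_of_map_eq hXae hpair hlaw hmh Measure.integrable_toReal_rnDeriv
  rw [integral_indicator_toReal_rnDeriv hac hA] at hnum
  rw [Measure.integral_toReal_rnDeriv hac, probReal_univ] at hden
  filter_upwards [hnum, hden] with ω hnum hden
  simp only [Set.indicator_one_mul_apply A fun y => (μ.rnDeriv ν y).toReal]
  have hn : ∀ᶠ n : ℕ in atTop, (n : ℝ) ≠ 0 :=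
    (eventually_ne_atTop 0).mono fun _ => Nat.cast_ne_zero.mpr
  simpa only [div_one, measureReal_def] using hnum.div_of_div_right hden one_ne_zero hn

/-- **Consistency of Sampling-Importance Resampling (SIR).** Let `μ ≪ ν` be probability measures
with importance weight `h = dμ/dν` (real-valued), let `X i` be i.i.d. with law `ν`, and let `A`
be measurable. Then almost surely the self-normalized importance-sampling estimator
`(Σ_{i<n} 1_A(X_i)·h(X_i)) / (Σ_{i<n} h(X_i))` converges to `μ(A)`. -/
theorem sir_self_normalized_tendsto {α Ω : Type*} [MeasurableSpace α] [MeasurableSpace Ω]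
    (μ ν : Measure α) [IsProbabilityMeasure μ] [IsProbabilityMeasure ν] (hac : μ ≪ ν)
    (P : Measure Ω) [IsProbabilityMeasure P]
    (X : ℕ → Ω → α) (hX : ∀ i, Measurable (X i))
    (hindep : iIndepFun X P)
    (hlaw : ∀ i, Measure.map (X i) P = ν)
    (A : Set α) (hA : MeasurableSet A) :
    ∀ᵐ ω ∂P, Tendsto
      (fun n : ℕ =>
        (∑ i ∈ Finset.range n,
          A.indicator (fun _ => (1 : ℝ)) (X i ω) * (μ.rnDeriv ν (X i ω)).toReal)
        / (∑ i ∈ Finset.range n, (μ.rnDeriv ν (X i ω)).toReal))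
      atTop (nhds (μ A).toReal) :=
  sir_self_normalized_tendsto_general μ ν hac P X hX hindep hlaw A hA
end

section
/- Let μ₁ and ν₁ be probability measures on a measurable space R₁ with μ₁(A) ≤ exp(ε₁)·ν₁(A) + δ₁ for every measurable A, and let κ, κ' be Markov kernels from R₁ to R₂ such that for every r ∈ R₁ and every measurable B ⊆ R₂, κ(r)(B) ≤ exp(ε₂)·κ'(r)(B) + δ₂ (with ε₁, ε₂, δ₁, δ₂ ≥ 0). Then the composed (product) mechanisms satisfy, for every measurable set S ⊆ R₁ × R₂: (μ₁ ⊗ κ)(S) ≤ exp(ε₁ + ε₂) · (ν₁ ⊗ κ')(S) + (δ₁ + δ₂), where μ₁ ⊗ κ denotes the measure on R₁ × R₂ given by S ↦ ∫ κ(r)({y : (r,y) ∈ S}) dμ₁(r). That is, adaptive composition of an (ε₁,δ₁)-DP mechanism with an (ε₂,δ₂)-DP mechanism is (ε₁+ε₂, δ₁+δ₂)-DP. -/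
/-! A set-wise bound `μ A ≤ c ν A + d` integrates, via the layer-cake formula, to the same bound
for `∫ f` with `0 ≤ f ≤ 1`. Disintegrating `(μ ⊗ κ)(S) = ∫ κ r (S_r) dμ(r)`, the kernel hypothesis
gives `κ r (S_r) ≤ f r + δ₂` with `f r := min (κ r (S_r)) (e^{ε₂} κ' r (S_r)) ≤ 1`; applying the
integrated first-stage bound to `f` and then `f ≤ e^{ε₂} κ' r (S_r)` yields the claim. -/

open MeasureTheory ProbabilityTheory Set

open scoped ENNReal

namespace MeasureTheory

variable {α : Type*} [MeasurableSpace α]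

/-- `(ε, δ)`-indistinguishability is the case `c = exp ε`, `d = δ`. -/
def Measure.Indistinguishable (c d : ℝ≥0∞) (μ ν : Measure α) : Prop :=
  ∀ A, MeasurableSet A → μ A ≤ c * ν A + d

theorem lintegral_ofReal_eq_setLIntegral_Ioc_meas_lt (ρ : Measure α) {g : α → ℝ}
    (hg : Measurable g) (hg0 : 0 ≤ g) (hg1 : g ≤ 1) :
    ∫⁻ a, ENNReal.ofReal (g a) ∂ρ = ∫⁻ t in Ioc (0 : ℝ) 1, ρ {a | t < g a} := by
  have hvanish : EqOn (fun t : ℝ => ρ {a | t < g a}) 0 (Ioi 1) := fun t ht => by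
    have : {a | t < g a} = ∅ := eq_empty_of_forall_notMem fun a ha => (hg1 a).not_gt (ht.trans ha)
    simp [this]
  rw [lintegral_eq_lintegral_meas_lt ρ (.of_forall hg0) hg.aemeasurable,
    ← Ioc_union_Ioi_eq_Ioi zero_le_one,
    lintegral_union measurableSet_Ioi (Ioc_disjoint_Ioi le_rfl),
    setLIntegral_eq_zero measurableSet_Ioi hvanish, add_zero]

theorem Measure.Indistinguishable.lintegral_le {c d : ℝ≥0∞} {μ ν : Measure α}
    (h : μ.Indistinguishable c d ν) {f : α → ℝ≥0∞} (hf : Measurable f) (hf1 : ∀ a, f a ≤ 1) :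
    ∫⁻ a, f a ∂μ ≤ c * ∫⁻ a, f a ∂ν + d := by
  set g : α → ℝ := fun a => (f a).toReal
  have hg : Measurable g := hf.ennreal_toReal
  have hfg : ∀ ρ : Measure α, ∫⁻ a, f a ∂ρ = ∫⁻ t in Ioc (0 : ℝ) 1, ρ {a | t < g a} := fun ρ => by
    rw [← lintegral_ofReal_eq_setLIntegral_Ioc_meas_lt ρ hg (fun a => ENNReal.toReal_nonneg)
      fun a => ENNReal.toReal_le_of_le_ofReal zero_le_one (by simpa using hf1 a)]
    exact lintegral_congr fun a => (ENNReal.ofReal_toReal (ne_top_of_le_ne_top ENNReal.one_ne_top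
      (hf1 a))).symm
  have hν : Measurable fun t : ℝ => ν {a | t < g a} :=
    Antitone.measurable fun s t hst => measure_mono fun a ha => hst.trans_lt ha
  calc ∫⁻ a, f a ∂μ = ∫⁻ t in Ioc (0 : ℝ) 1, μ {a | t < g a} := hfg μ
    _ ≤ ∫⁻ t in Ioc (0 : ℝ) 1, (c * ν {a | t < g a} + d) :=
        lintegral_mono fun t => h _ (hg measurableSet_Ioi)
    _ = c * ∫⁻ a, f a ∂ν + d := by
        rw [lintegral_add_right _ measurable_const, lintegral_const_mul _ hν, setLIntegral_const,
          Real.volume_Ioc, sub_zero, ENNReal.ofReal_one, mul_one, hfg ν]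

theorem Measure.Indistinguishable.compProd {β : Type*} [MeasurableSpace β]
    {c₁ d₁ c₂ d₂ : ℝ≥0∞} {μ ν : Measure α} [IsProbabilityMeasure μ] [SFinite ν]
    {κ κ' : Kernel α β} [IsMarkovKernel κ] [IsSFiniteKernel κ']
    (h₁ : μ.Indistinguishable c₁ d₁ ν) (h₂ : ∀ r, (κ r).Indistinguishable c₂ d₂ (κ' r)) :
    (μ ⊗ₘ κ).Indistinguishable (c₁ * c₂) (d₁ + d₂) (ν ⊗ₘ κ') := by
  intro S hS
  rw [Measure.compProd_apply hS, Measure.compProd_apply hS]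
  set F : α → ℝ≥0∞ := fun r => κ r (Prod.mk r ⁻¹' S)
  set F' : α → ℝ≥0∞ := fun r => κ' r (Prod.mk r ⁻¹' S)
  have hF : Measurable F := Kernel.measurable_kernel_prodMk_left hS
  have hF' : Measurable F' := Kernel.measurable_kernel_prodMk_left hS
  -- `F ≤ c₂ F' + d₂` pointwise, but `F` cannot be replaced by `c₂ F'` in `h₁.lintegral_le`,
  -- which needs an integrand bounded by `1`.
  set f : α → ℝ≥0∞ := fun r => min (F r) (c₂ * F' r)
  have hF_le : ∀ r, F r ≤ f r + d₂ := fun r => by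
    rw [← min_add_add_right]
    exact le_min le_self_add (h₂ r _ (measurable_prodMk_left hS))
  calc ∫⁻ r, F r ∂μ ≤ ∫⁻ r, (f r + d₂) ∂μ := lintegral_mono hF_le
    _ = ∫⁻ r, f r ∂μ + d₂ := by
        rw [lintegral_add_right _ measurable_const, lintegral_const, measure_univ, mul_one]
    _ ≤ c₁ * ∫⁻ r, f r ∂ν + d₁ + d₂ := by
        gcongr
        exact h₁.lintegral_le (hF.min (hF'.const_mul _))
          fun r => (min_le_left _ _).trans prob_le_one
    _ ≤ c₁ * ∫⁻ r, c₂ * F' r ∂ν + d₁ + d₂ := by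
        gcongr with r
        exact min_le_right _ _
    _ = c₁ * c₂ * ∫⁻ r, F' r ∂ν + (d₁ + d₂) := by
        rw [lintegral_const_mul _ hF', mul_assoc, add_assoc]

end MeasureTheory

theorem dp_adaptive_composition_general {R₁ R₂ : Type*} [MeasurableSpace R₁] [MeasurableSpace R₂]
    (μ₁ ν₁ : Measure R₁) [IsProbabilityMeasure μ₁] [IsProbabilityMeasure ν₁]
    (ε₁ ε₂ δ₁ δ₂ : ℝ) (hδ₁ : 0 ≤ δ₁) (hδ₂ : 0 ≤ δ₂)
    (h₁ : ∀ A : Set R₁, MeasurableSet A →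
      μ₁ A ≤ ENNReal.ofReal (Real.exp ε₁) * ν₁ A + ENNReal.ofReal δ₁)
    (κ κ' : Kernel R₁ R₂) [IsMarkovKernel κ] [IsMarkovKernel κ']
    (h₂ : ∀ r : R₁, ∀ B : Set R₂, MeasurableSet B →
      κ r B ≤ ENNReal.ofReal (Real.exp ε₂) * κ' r B + ENNReal.ofReal δ₂)
    (S : Set (R₁ × R₂)) (hS : MeasurableSet S) :
    (μ₁ ⊗ₘ κ) S ≤ ENNReal.ofReal (Real.exp (ε₁ + ε₂)) * (ν₁ ⊗ₘ κ') S
      + ENNReal.ofReal (δ₁ + δ₂) := by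
  have h := Measure.Indistinguishable.compProd (κ := κ) (κ' := κ') h₁ fun r => h₂ r
  rw [← ENNReal.ofReal_mul (Real.exp_nonneg _), ← Real.exp_add,
    ← ENNReal.ofReal_add hδ₁ hδ₂] at h
  exact h S hS

/-- **Basic (adaptive) composition of differential privacy.** If `(μ₁, ν₁)` are
`(ε₁,δ₁)`-indistinguishable and the Markov kernels `κ, κ'` are pointwise
`(ε₂,δ₂)`-indistinguishable, then the composed mechanisms `μ₁ ⊗ₘ κ` and `ν₁ ⊗ₘ κ'` are
`(ε₁+ε₂, δ₁+δ₂)`-indistinguishable. -/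
theorem dp_adaptive_composition {R₁ R₂ : Type*} [MeasurableSpace R₁] [MeasurableSpace R₂]
    (μ₁ ν₁ : Measure R₁) [IsProbabilityMeasure μ₁] [IsProbabilityMeasure ν₁]
    (ε₁ ε₂ δ₁ δ₂ : ℝ) (hε₁ : 0 ≤ ε₁) (hε₂ : 0 ≤ ε₂) (hδ₁ : 0 ≤ δ₁) (hδ₂ : 0 ≤ δ₂)
    (h₁ : ∀ A : Set R₁, MeasurableSet A →
      μ₁ A ≤ ENNReal.ofReal (Real.exp ε₁) * ν₁ A + ENNReal.ofReal δ₁)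
    (κ κ' : Kernel R₁ R₂) [IsMarkovKernel κ] [IsMarkovKernel κ']
    (h₂ : ∀ r : R₁, ∀ B : Set R₂, MeasurableSet B →
      κ r B ≤ ENNReal.ofReal (Real.exp ε₂) * κ' r B + ENNReal.ofReal δ₂)
    (S : Set (R₁ × R₂)) (hS : MeasurableSet S) :
    (μ₁ ⊗ₘ κ) S ≤ ENNReal.ofReal (Real.exp (ε₁ + ε₂)) * (ν₁ ⊗ₘ κ') S
      + ENNReal.ofReal (δ₁ + δ₂) :=
  dp_adaptive_composition_general μ₁ ν₁ ε₁ ε₂ δ₁ δ₂ hδ₁ hδ₂ h₁ κ κ' h₂ S hS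
end
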